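/- arXiv:2406.17964 — 5 statements merged into one kernel-verified Lean document; each statement's English description precedes it below -/
import Mathlib

section
/- For every instance G = (I⁰, I¹; F; w) there exists a refinement α of the vertex weights on side 0 that is locally maximin. -/
/-!
Minimise the energy `∑ⱼ p(j)² / w(j)` over the refinements, a compact set. Moving mass `t` from
an edge `ij` to an edge `ik` changes the energy by `t * (t * (1 / w j + 1 / w k) - 2 * (ρ j - ρ k))`,
which is negative for small `t > 0` when `ρ k < ρ j`. So at a minimiser no vertex of side 0
sends positive weight to a neighbour whose density is not minimal.
-/

open Finset

variable {V : Type*} [DecidableEq V]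

/-- `(I0, I1; F; w)` is a valid input instance: the vertex sets `I0`, `I1` are disjoint,
every edge has its first endpoint in `I0` and second endpoint in `I1`,
and vertex weights are positive. -/
def IsInstance (I0 I1 : Finset V) (F : Finset (V × V)) (w : V → ℝ) : Prop :=
  Disjoint I0 I1 ∧ (∀ e ∈ F, e.1 ∈ I0 ∧ e.2 ∈ I1) ∧ (∀ v ∈ I0 ∪ I1, 0 < w v)

/-- Payload received by a side-0 vertex `i` from edge weights `a`
(the sum of `a` over edges incident to `i`). -/
noncomputable def payload0 (F : Finset (V × V)) (a : V × V → ℝ) (i : V) : ℝ :=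
  ∑ e ∈ F.filter (fun e => e.1 = i), a e

/-- Payload received by a side-1 vertex `j` from edge weights `a`. -/
noncomputable def payload1 (F : Finset (V × V)) (a : V × V → ℝ) (j : V) : ℝ :=
  ∑ e ∈ F.filter (fun e => e.2 = j), a e

/-- `a` is a refinement of the side-0 vertex weights. -/
def IsRefinement0 (I0 : Finset V) (F : Finset (V × V)) (w : V → ℝ) (a : V × V → ℝ) : Prop :=
  (∀ e, 0 ≤ a e) ∧ (∀ e, e ∉ F → a e = 0) ∧
    ∀ i ∈ I0, (∃ j, (i, j) ∈ F) → payload0 F a i = w i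

/-- `a` is a refinement of the side-1 vertex weights. -/
def IsRefinement1 (I1 : Finset V) (F : Finset (V × V)) (w : V → ℝ) (a : V × V → ℝ) : Prop :=
  (∀ e, 0 ≤ a e) ∧ (∀ e, e ∉ F → a e = 0) ∧
    ∀ j ∈ I1, (∃ i, (i, j) ∈ F) → payload1 F a j = w j

/-- Payload density at a side-0 vertex. -/
noncomputable def density0 (F : Finset (V × V)) (w : V → ℝ) (a : V × V → ℝ) (i : V) : ℝ :=
  payload0 F a i / w i

/-- Payload density at a side-1 vertex. -/
noncomputable def density1 (F : Finset (V × V)) (w : V → ℝ) (a : V × V → ℝ) (j : V) : ℝ :=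
  payload1 F a j / w j

/-- A side-0 refinement is locally maximin: positive weight is sent only to neighbours
of minimum payload density. -/
def LocallyMaximin0 (F : Finset (V × V)) (w : V → ℝ) (a : V × V → ℝ) : Prop :=
  ∀ e ∈ F, 0 < a e → ∀ k, (e.1, k) ∈ F → density1 F w a e.2 ≤ density1 F w a k

/-- A side-1 refinement is locally maximin. -/
def LocallyMaximin1 (F : Finset (V × V)) (w : V → ℝ) (a : V × V → ℝ) : Prop :=
  ∀ e ∈ F, 0 < a e → ∀ k, (k, e.2) ∈ F → density0 F w a e.1 ≤ density0 F w a k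

/-- `b` is the proportional response to the side-0 refinement `a`. -/
def IsPropRespOf0 (F : Finset (V × V)) (w : V → ℝ) (a b : V × V → ℝ) : Prop :=
  (∀ e, e ∉ F → b e = 0) ∧ ∀ e ∈ F, b e = a e * w e.2 / payload1 F a e.2

/-- `a` is the proportional response to the side-1 refinement `b`. -/
def IsPropRespOf1 (F : Finset (V × V)) (w : V → ℝ) (b a : V × V → ℝ) : Prop :=
  (∀ e, e ∉ F → a e = 0) ∧ ∀ e ∈ F, a e = b e * w e.1 / payload0 F b e.1

theorem isCompact_setOf_isRefinement0 (I0 : Finset V) (F : Finset (V × V)) (w : V → ℝ)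
    (hF : ∀ e ∈ F, e.1 ∈ I0) : IsCompact {a | IsRefinement0 I0 F w a} := by
  have hclosed : IsClosed {a | IsRefinement0 I0 F w a} := by
    simp only [IsRefinement0, Set.ofPred_and, Set.ofPred_forall]
    refine (isClosed_iInter fun e => isClosed_le continuous_const (continuous_apply e)).inter
      ((isClosed_iInter fun e => isClosed_iInter fun _ =>
        isClosed_eq (continuous_apply e) continuous_const).inter
      (isClosed_iInter fun i => isClosed_iInter fun _ => isClosed_iInter fun _ =>
        isClosed_eq (continuous_finsetSum _ fun e _ => continuous_apply e) continuous_const))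
  refine (isCompact_univ_pi fun e => isCompact_Icc
    (a := 0) (b := if e ∈ F then w e.1 else 0)).of_isClosed_subset hclosed ?_
  rintro a ⟨ha0, haF, hpay⟩ e -
  by_cases he : e ∈ F
  · refine ⟨ha0 e, ?_⟩
    rw [if_pos he, ← hpay e.1 (hF e he) ⟨e.2, he⟩]
    exact single_le_sum (fun x _ => ha0 x) (mem_filter.mpr ⟨he, rfl⟩)
  · simp [he, haF e he]

noncomputable def uniformSplit (F : Finset (V × V)) (w : V → ℝ) (e : V × V) : ℝ :=
  if e ∈ F then w e.1 / #(F.filter fun e' => e'.1 = e.1) else 0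

theorem isRefinement0_uniformSplit (I0 : Finset V) (F : Finset (V × V)) (w : V → ℝ)
    (hw : ∀ e ∈ F, 0 ≤ w e.1) : IsRefinement0 I0 F w (uniformSplit F w) := by
  refine ⟨fun e => ?_, fun e he => if_neg he, fun i _ ⟨j, hij⟩ => ?_⟩
  · unfold uniformSplit
    split_ifs with he
    exacts [div_nonneg (hw e he) (Nat.cast_nonneg _), le_rfl]
  · have hdeg : (#(F.filter fun e => e.1 = i) : ℝ) ≠ 0 :=
      Nat.cast_ne_zero.mpr (card_ne_zero_of_mem (mem_filter.mpr ⟨hij, rfl⟩))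
    have hconst : ∀ e ∈ F.filter (fun e => e.1 = i),
        uniformSplit F w e = w i / #(F.filter fun e => e.1 = i) := by
      intro e he
      rw [mem_filter] at he
      rw [uniformSplit, if_pos he.1, he.2]
    rw [payload0, sum_congr rfl hconst, sum_const, nsmul_eq_mul, mul_div_cancel₀ _ hdeg]

def transfer (a : V × V → ℝ) (e e' : V × V) (t : ℝ) : V × V → ℝ :=
  a - Pi.single e t + Pi.single e' t

theorem payload0_transfer {F : Finset (V × V)} {e e' : V × V} (he : e ∈ F) (he' : e' ∈ F)
    (h : e.1 = e'.1) (a : V × V → ℝ) (t : ℝ) (i : V) :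
    payload0 F (transfer a e e' t) i = payload0 F a i := by
  simp [payload0, transfer, sum_add_distrib, sum_sub_distrib, sum_pi_single', he, he', h]

theorem payload1_transfer {F : Finset (V × V)} {e e' : V × V} (he : e ∈ F) (he' : e' ∈ F)
    (a : V × V → ℝ) (t : ℝ) (j : V) :
    payload1 F (transfer a e e' t) j =
      payload1 F a j - (if e.2 = j then t else 0) + (if e'.2 = j then t else 0) := by
  simp [payload1, transfer, sum_add_distrib, sum_sub_distrib, sum_pi_single', he, he']

theorem isRefinement0_transfer {I0 : Finset V} {F : Finset (V × V)} {w : V → ℝ}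
    {a : V × V → ℝ} {e e' : V × V} {t : ℝ} (ha : IsRefinement0 I0 F w a) (he : e ∈ F)
    (he' : e' ∈ F) (h : e.1 = e'.1) (ht : 0 ≤ t) (hta : t ≤ a e) :
    IsRefinement0 I0 F w (transfer a e e' t) := by
  obtain ⟨ha0, haF, hpay⟩ := ha
  refine ⟨fun x => ?_, fun x hx => ?_, fun i hi hij => ?_⟩
  · have hsingle : 0 ≤ Pi.single (M := fun _ => ℝ) e' t x := by
      rw [Pi.single_apply]; split_ifs <;> simp [ht]
    by_cases hx : x = e
    · subst hx; simp only [transfer, Pi.add_apply, Pi.sub_apply, Pi.single_eq_same]; linarith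
    · simp only [transfer, Pi.add_apply, Pi.sub_apply, Pi.single_eq_of_ne hx]; linarith [ha0 x]
  · have hxe : x ≠ e := fun h => hx (h ▸ he)
    have hxe' : x ≠ e' := fun h => hx (h ▸ he')
    simp [transfer, Pi.single_eq_of_ne hxe, Pi.single_eq_of_ne hxe', haF x hx]
  · rw [payload0_transfer he he' h]
    exact hpay i hi hij

noncomputable def energy (J : Finset V) (F : Finset (V × V)) (w : V → ℝ) (a : V × V → ℝ) : ℝ :=
  ∑ j ∈ J, payload1 F a j ^ 2 / w j

theorem continuous_energy (J : Finset V) (F : Finset (V × V)) (w : V → ℝ) :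
    Continuous (energy J F w) := by
  unfold energy payload1
  fun_prop

theorem energy_transfer {J : Finset V} {F : Finset (V × V)} {i j k : V} (hj : j ∈ J)
    (hk : k ∈ J) (hjk : j ≠ k) (hij : (i, j) ∈ F) (hik : (i, k) ∈ F) (w : V → ℝ)
    (a : V × V → ℝ) (t : ℝ) :
    energy J F w (transfer a (i, j) (i, k) t) = energy J F w a +
      (((payload1 F a j - t) ^ 2 - payload1 F a j ^ 2) / w j +
        ((payload1 F a k + t) ^ 2 - payload1 F a k ^ 2) / w k) := by
  rw [energy, energy, ← sub_eq_iff_eq_add', ← sum_sub_distrib,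
    sum_eq_add_of_mem j k hj hk hjk fun x _ hx => ?_]
  · simp [payload1_transfer hij hik, hjk, hjk.symm, sub_div]
  · simp [payload1_transfer hij hik, Ne.symm hx.1, Ne.symm hx.2]

theorem exists_transfer_sq_div_lt {p q u v c : ℝ} (hu : 0 < u) (hv : 0 < v) (hc : 0 < c)
    (h : q / v < p / u) :
    ∃ t, 0 < t ∧ t ≤ c ∧ ((p - t) ^ 2 - p ^ 2) / u + ((q + t) ^ 2 - q ^ 2) / v < 0 := by
  set d := 1 / u + 1 / v
  set δ := p / u - q / v
  have hd : 0 < d := by positivity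
  have hδ : 0 < δ := sub_pos.mpr h
  set t := min c (δ / d)
  have ht : 0 < t := lt_min hc (div_pos hδ hd)
  refine ⟨t, ht, min_le_left _ _, ?_⟩
  have htd : t * d ≤ δ := (le_div_iff₀ hd).mp (min_le_right _ _)
  have hquad : ((p - t) ^ 2 - p ^ 2) / u + ((q + t) ^ 2 - q ^ 2) / v = t * (t * d - 2 * δ) := by
    simp only [d, δ]
    field_simp
    ring
  rw [hquad]
  exact mul_neg_of_pos_of_neg ht (by linarith)

/-- **Existence of a locally maximin refinement.**
Every instance admits a refinement of the side-0 vertex weights that is locally maximin. -/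
theorem exists_locally_maximin_refinement
    (I0 I1 : Finset V) (F : Finset (V × V)) (w : V → ℝ)
    (hG : IsInstance I0 I1 F w) :
    ∃ a : V × V → ℝ, IsRefinement0 I0 F w a ∧ LocallyMaximin0 F w a := by
  obtain ⟨-, hF, hw⟩ := hG
  have hw1 : ∀ j ∈ I1, 0 < w j := fun j hj => hw j (mem_union_right _ hj)
  obtain ⟨a, ha, hmin⟩ :=
    (isCompact_setOf_isRefinement0 I0 F w fun e he => (hF e he).1).exists_isMinOn
      ⟨_, isRefinement0_uniformSplit I0 F w fun e he => (hw _ (mem_union_left _ (hF e he).1)).le⟩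
      (continuous_energy I1 F w).continuousOn
  refine ⟨a, ha, fun ⟨i, j⟩ hij hpos k hik => le_of_not_gt fun hlt => ?_⟩
  have hjk : j ≠ k := by rintro rfl; exact lt_irrefl _ hlt
  obtain ⟨hj, hk⟩ : j ∈ I1 ∧ k ∈ I1 := ⟨(hF _ hij).2, (hF _ hik).2⟩
  obtain ⟨t, ht, hta, hdecrease⟩ := exists_transfer_sq_div_lt (hw1 j hj) (hw1 k hk) hpos hlt
  have hle := isMinOn_iff.mp hmin _ (isRefinement0_transfer ha hij hik rfl ht.le hta)
  rw [energy_transfer hj hk hjk hij hik] at hle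
  linarith
end

section
/- Let G = (I⁰, I¹; F; w) be an instance and let α⁰ be a locally maximin refinement of the side-0 vertex weights (so every vertex of I¹ having at least one neighbor receives positive payload, and the proportional response α¹ of α⁰ is the unique refinement of the side-1 weights with α¹(ij) = α⁰(ij)·w(j)/p¹(j)). Let ρ¹ be the payload density vector on I¹ induced by α⁰ and ρ⁰ the payload density vector on I⁰ induced by α¹. Then: (1) for every edge {i,j} ∈ F with i ∈ I⁰, j ∈ I¹ and α⁰(ij) > 0, one has ρ⁰(i)·ρ¹(j) = 1; (2) the refinement α¹ is locally maximin; and (3) the proportional response of α¹ equals α⁰. -/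
open Finset

variable {V : Type*} [DecidableEq V]

/-
A locally maximin refinement `a` sends all of a vertex `i`'s weight to neighbours of one common
payload density `λ(i) > 0`, and its proportional response is `b(ij) = a(ij) / ρ¹(j)`.
Hence `i` receives `p⁰(i) = w(i) / λ(i)` from `b`, i.e. `ρ⁰(i) = 1 / ρ¹(j)` on every edge with
`a(ij) > 0`. Inverting densities reverses the order, so minimality of `ρ¹` along `a` becomes
minimality of `ρ⁰` along `b`, and `b(ij) · w(i) / p⁰(i) = b(ij) · ρ¹(j) = a(ij)`.
-/

section

variable {I0 I1 : Finset V} {F : Finset (V × V)} {w : V → ℝ} {a b : V × V → ℝ} {e : V × V}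

theorem IsInstance.weight_fst_pos (hG : IsInstance I0 I1 F w) (he : e ∈ F) : 0 < w e.1 :=
  hG.2.2 _ (mem_union_left _ (hG.2.1 e he).1)

theorem IsInstance.weight_snd_pos (hG : IsInstance I0 I1 F w) (he : e ∈ F) : 0 < w e.2 :=
  hG.2.2 _ (mem_union_right _ (hG.2.1 e he).2)

theorem exists_pos_of_payload0_pos {i : V} (h : 0 < payload0 F a i) :
    ∃ x ∈ F, x.1 = i ∧ 0 < a x := by
  obtain ⟨x, hx, hax⟩ :=
    Finset.exists_lt_of_sum_lt (f := fun _ => (0 : ℝ)) (by simpa [payload0] using h)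
  exact ⟨x, (mem_filter.1 hx).1, (mem_filter.1 hx).2, hax⟩

theorem le_payload1 (ha : ∀ e, 0 ≤ a e) (he : e ∈ F) : a e ≤ payload1 F a e.2 :=
  single_le_sum (fun x _ => ha x) (mem_filter.2 ⟨he, rfl⟩)

theorem IsRefinement0.exists_pos_of_mem (hG : IsInstance I0 I1 F w)
    (ha : IsRefinement0 I0 F w a) (he : e ∈ F) : ∃ x ∈ F, x.1 = e.1 ∧ 0 < a x := by
  refine exists_pos_of_payload0_pos ?_
  rw [ha.2.2 _ (hG.2.1 e he).1 ⟨e.2, he⟩]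
  exact hG.weight_fst_pos he

theorem LocallyMaximin0.density1_eq_of_pos (hm : LocallyMaximin0 F w a) {x : V × V}
    (he : e ∈ F) (hae : 0 < a e) (hx : x ∈ F) (hxe : x.1 = e.1) (hax : 0 < a x) :
    density1 F w a x.2 = density1 F w a e.2 :=
  le_antisymm (hm x hx hax e.2 (hxe ▸ he)) (hm e he hae x.2 (hxe ▸ hx))

/-- Every edge out of `e.1` has density at least that of an edge carrying positive weight,
and the latter is positive. -/
theorem LocallyMaximin0.density1_pos (hG : IsInstance I0 I1 F w)
    (ha : IsRefinement0 I0 F w a) (hm : LocallyMaximin0 F w a) (he : e ∈ F) :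
    0 < density1 F w a e.2 := by
  obtain ⟨x, hx, hxe, hax⟩ := ha.exists_pos_of_mem hG he
  have hpx : 0 < payload1 F a x.2 := hax.trans_le (le_payload1 ha.1 hx)
  exact (div_pos hpx (hG.weight_snd_pos hx)).trans_le (hm x hx hax e.2 (hxe ▸ he))

theorem LocallyMaximin0.payload1_pos (hG : IsInstance I0 I1 F w)
    (ha : IsRefinement0 I0 F w a) (hm : LocallyMaximin0 F w a) (he : e ∈ F) :
    0 < payload1 F a e.2 :=
  (div_pos_iff_of_pos_right (hG.weight_snd_pos he)).1 (hm.density1_pos hG ha he)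

theorem IsPropRespOf0.apply_eq_div_density1 (hb : IsPropRespOf0 F w a b) (he : e ∈ F) :
    b e = a e / density1 F w a e.2 := by
  rw [hb.2 e he, density1, div_div_eq_mul_div]

theorem IsPropRespOf0.apply_eq_zero (hb : IsPropRespOf0 F w a b) (hae : a e = 0) : b e = 0 := by
  by_cases he : e ∈ F
  · rw [hb.apply_eq_div_density1 he, hae, zero_div]
  · exact hb.1 e he

/-- On a weighted edge `b · ρ¹ = a`, and all weighted edges out of `e.1` share the density
`ρ¹(e.2)`. -/
theorem IsPropRespOf0.payload0_mul_density1 (hG : IsInstance I0 I1 F w)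
    (ha : IsRefinement0 I0 F w a) (hm : LocallyMaximin0 F w a) (hb : IsPropRespOf0 F w a b)
    (he : e ∈ F) (hae : 0 < a e) :
    payload0 F b e.1 * density1 F w a e.2 = payload0 F a e.1 := by
  rw [payload0, payload0, sum_mul]
  refine sum_congr rfl fun x hx => ?_
  obtain ⟨hxF, hxe⟩ := mem_filter.1 hx
  rcases (ha.1 x).eq_or_lt with hax | hax
  · rw [hb.apply_eq_zero hax.symm, ← hax, zero_mul]
  · rw [← hm.density1_eq_of_pos he hae hxF hxe hax, hb.apply_eq_div_density1 hxF,
      div_mul_cancel₀ _ (hm.density1_pos hG ha hxF).ne']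

theorem IsPropRespOf0.density0_mul_density1 (hG : IsInstance I0 I1 F w)
    (ha : IsRefinement0 I0 F w a) (hm : LocallyMaximin0 F w a) (hb : IsPropRespOf0 F w a b)
    (he : e ∈ F) (hae : 0 < a e) :
    density0 F w b e.1 * density1 F w a e.2 = 1 := by
  have hw := (hG.weight_fst_pos he).ne'
  rw [density0, div_mul_eq_mul_div, hb.payload0_mul_density1 hG ha hm he hae,
    ha.2.2 _ (hG.2.1 e he).1 ⟨e.2, he⟩, div_self hw]

theorem IsPropRespOf0.density0_eq_inv (hG : IsInstance I0 I1 F w)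
    (ha : IsRefinement0 I0 F w a) (hm : LocallyMaximin0 F w a) (hb : IsPropRespOf0 F w a b)
    (he : e ∈ F) (hae : 0 < a e) :
    density0 F w b e.1 = (density1 F w a e.2)⁻¹ :=
  eq_inv_of_mul_eq_one_left (hb.density0_mul_density1 hG ha hm he hae)

theorem IsPropRespOf0.isRefinement1 (hG : IsInstance I0 I1 F w)
    (ha : IsRefinement0 I0 F w a) (hm : LocallyMaximin0 F w a) (hb : IsPropRespOf0 F w a b) :
    IsRefinement1 I1 F w b := by
  refine ⟨fun x => ?_, hb.1, fun j _ ⟨i, hij⟩ => ?_⟩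
  · by_cases hx : x ∈ F
    · rw [hb.apply_eq_div_density1 hx]
      exact div_nonneg (ha.1 x) (hm.density1_pos hG ha hx).le
    · exact (hb.1 x hx).ge
  · have hp : payload1 F a j ≠ 0 := (hm.payload1_pos hG ha hij).ne'
    calc payload1 F b j = ∑ x ∈ F.filter (fun x => x.2 = j), a x * w j / payload1 F a j :=
          sum_congr rfl fun x hx => by
            obtain ⟨hxF, rfl⟩ := mem_filter.1 hx
            exact hb.2 x hxF
      _ = w j := by rw [← sum_div, ← sum_mul, ← payload1, mul_div_cancel_left₀ _ hp]

/-- Along a weighted edge `ρ⁰ = 1 / ρ¹`, so the minimality of `ρ¹(e.2)` among the neighbours of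
each side-0 vertex turns into the minimality of `ρ⁰(e.1)` among the neighbours of `e.2`. -/
theorem IsPropRespOf0.locallyMaximin1 (hG : IsInstance I0 I1 F w)
    (ha : IsRefinement0 I0 F w a) (hm : LocallyMaximin0 F w a) (hb : IsPropRespOf0 F w a b) :
    LocallyMaximin1 F w b := by
  intro e he hbe k hk
  have hae : 0 < a e := (ha.1 e).lt_of_ne fun h => hbe.ne' (hb.apply_eq_zero h.symm)
  obtain ⟨x, hx, rfl, hax⟩ := ha.exists_pos_of_mem hG hk
  rw [hb.density0_eq_inv hG ha hm he hae, hb.density0_eq_inv hG ha hm hx hax]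
  exact inv_anti₀ (hm.density1_pos hG ha hx) (hm x hx hax e.2 hk)

theorem IsPropRespOf0.isPropRespOf1 (hG : IsInstance I0 I1 F w)
    (ha : IsRefinement0 I0 F w a) (hm : LocallyMaximin0 F w a) (hb : IsPropRespOf0 F w a b) :
    IsPropRespOf1 F w b a := by
  refine ⟨ha.2.1, fun e he => ?_⟩
  rcases (ha.1 e).eq_or_lt with hae | hae
  · rw [hb.apply_eq_zero hae.symm, ← hae, zero_mul, zero_div]
  · rw [← div_div_eq_mul_div, ← density0, hb.density0_eq_inv hG ha hm he hae, div_inv_eq_mul,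
      hb.apply_eq_div_density1 he, div_mul_cancel₀ _ (hm.density1_pos hG ha he).ne']

end

/-- **Proportional response to a locally maximin refinement.**
Let `a0` be a locally maximin refinement of the side-0 weights.  Then every side-1 vertex
with at least one neighbour receives positive payload, so the proportional response of `a0`
is the unique `a1` with `a1(ij) = a0(ij)·w(j)/p¹(j)` on `F`; it is a refinement of the
side-1 weights, and:
(1) on every edge of positive weight, `ρ⁰(i)·ρ¹(j) = 1`;
(2) `a1` is locally maximin; and
(3) the proportional response of `a1` is `a0`. -/
theorem prop_resp_of_locally_maximin
    (I0 I1 : Finset V) (F : Finset (V × V)) (w : V → ℝ)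
    (hG : IsInstance I0 I1 F w)
    (a0 : V × V → ℝ)
    (ha0 : IsRefinement0 I0 F w a0) (hm0 : LocallyMaximin0 F w a0) :
    (∀ j ∈ I1, (∃ i, (i, j) ∈ F) → 0 < payload1 F a0 j) ∧
    ∀ a1 : V × V → ℝ, IsPropRespOf0 F w a0 a1 →
      IsRefinement1 I1 F w a1 ∧
      (∀ e ∈ F, 0 < a0 e → density0 F w a1 e.1 * density1 F w a0 e.2 = 1) ∧
      LocallyMaximin1 F w a1 ∧
      IsPropRespOf1 F w a1 a0 := by
  refine ⟨fun j _ ⟨i, hij⟩ => hm0.payload1_pos hG ha0 hij, fun a1 ha1 => ?_⟩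
  exact ⟨ha1.isRefinement1 hG ha0 hm0, fun e he hae => ha1.density0_mul_density1 hG ha0 hm0 he hae,
    ha1.locallyMaximin1 hG ha0 hm0, ha1.isPropRespOf1 hG ha0 hm0⟩
end

section
/- Let G = (I⁰, I¹; F; w) be an instance and let α be a locally maximin refinement of the side-0 vertex weights, inducing the payload density vector ρ on I¹. Then ρ coincides with the density vector ρ* assigned by the density decomposition of G with ground set I¹: for every j ∈ I¹, ρ(j) = ρ*(j). Moreover, if (S⁰_ℓ, S¹_ℓ) is a pair of the density decomposition with ground set I¹, then S⁰_ℓ is exactly the set of vertices i ∈ I⁰ with α(ij) > 0 for some j ∈ S¹_ℓ. In particular, any two locally maximin refinements of the side-0 weights induce the same payload density vector on I¹. -/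
open Finset

variable {V : Type*} [DecidableEq V]

/-- Extended-real ratio with the conventions `0/0 = 0` and `x/0 = +∞` for `x > 0`. -/
noncomputable def eratio (a b : ℝ) : EReal :=
  if b = 0 then (if a = 0 then (0 : EReal) else ⊤) else ((a / b : ℝ) : EReal)

/-- Total weight of a vertex set. -/
noncomputable def wsum (w : V → ℝ) (S : Finset V) : ℝ := ∑ v ∈ S, w v

variable [Fintype V]

/-- With `I1` as ground set, the closed neighbourhood `F[S]` of `S ⊆ I1`:
side-0 vertices having at least one neighbour, all of whose neighbours lie in `S`. -/
def closedNbr1 (I0 : Finset V) (F : Finset (V × V)) (S : Finset V) : Finset V :=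
  I0.filter fun i => (∃ j, (i, j) ∈ F) ∧ ∀ j, (i, j) ∈ F → j ∈ S

/-- Density `ρ(S) = w(F[S]) / w(S)` of `S ⊆ I1`, with the conventions
`0/0 = 0` and `x/0 = +∞`. -/
noncomputable def dens1 (I0 : Finset V) (F : Finset (V × V)) (w : V → ℝ)
    (S : Finset V) : EReal :=
  eratio (wsum w (closedNbr1 I0 F S)) (wsum w S)

/-- `S` is the maximal densest subset of the ground set `I1`:
it is densest and contains every densest subset. -/
def IsMaxDensest1 (I0 I1 : Finset V) (F : Finset (V × V)) (w : V → ℝ)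
    (S : Finset V) : Prop :=
  S ⊆ I1 ∧ (∀ T ⊆ I1, dens1 I0 F w T ≤ dens1 I0 F w S) ∧
    ∀ T ⊆ I1, (∀ T' ⊆ I1, dens1 I0 F w T' ≤ dens1 I0 F w T) → T ⊆ S

/-- Restriction of the edge set to a sub-instance. -/
def restrictF (F : Finset (V × V)) (I0 I1 : Finset V) : Finset (V × V) :=
  F.filter fun e => e.1 ∈ I0 ∧ e.2 ∈ I1

/-- `IsDecomp1 w I0 I1 F L` states that the list `L` of pairs `(S⁰_ℓ, S¹_ℓ)` is the density
decomposition of the instance `(I0, I1; F; w)` with ground set `I1`: at each step `S¹_ℓ` is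
the maximal densest subset of the current sub-instance, `S⁰_ℓ = F[S¹_ℓ]` is its closed
neighbourhood, and both are removed together with all incident edges, until both sides
are empty. -/
def IsDecomp1 (w : V → ℝ) :
    Finset V → Finset V → Finset (V × V) → List (Finset V × Finset V) → Prop
  | I0', I1', _, [] => I0' = ∅ ∧ I1' = ∅
  | I0', I1', F', p :: rest =>
      (I0'.Nonempty ∨ I1'.Nonempty) ∧
      IsMaxDensest1 I0' I1' F' w p.2 ∧
      p.1 = closedNbr1 I0' F' p.2 ∧
      IsDecomp1 w (I0' \ p.1) (I1' \ p.2) (restrictF F' (I0' \ p.1) (I1' \ p.2)) rest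

/-
Any refinement sends at least `w(F[S])` into a set `S ⊆ I1`, since every vertex of `F[S]`
spends its whole weight inside `S`. Conversely, if `a` is locally maximin and
`S = {ρ ≥ t}` is a superlevel set of its payload density, a vertex sending positive weight
into `S` has all its neighbours of density at least `t`, hence lies in `F[S]`; so
`a` pours exactly `w(F[S])` into `S`. Comparing two maximin refinements on the superlevel
set of their largest disagreement yields uniqueness of `ρ`.

For `t = max ρ` the set `{ρ = t}` therefore has density `t`, every set has density at most
`t`, and a densest set must carry density exactly `t` at each of its vertices: `{ρ = t}` is
the maximal densest subset and `F[{ρ = t}]` is the set of vertices feeding it. Deleting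
both leaves a locally maximin refinement of the sub-instance with the same densities, and
the claim follows by induction along the decomposition.
-/

section Refinement

variable {I0 I1 : Finset V} {F : Finset (V × V)} {w : V → ℝ} {a : V × V → ℝ}

theorem IsInstance.fst_mem (hG : IsInstance I0 I1 F w) {e : V × V} (he : e ∈ F) : e.1 ∈ I0 :=
  (hG.2.1 e he).1

theorem IsInstance.snd_mem (hG : IsInstance I0 I1 F w) {e : V × V} (he : e ∈ F) : e.2 ∈ I1 :=
  (hG.2.1 e he).2

theorem IsInstance.pos_of_mem_left (hG : IsInstance I0 I1 F w) {i : V} (hi : i ∈ I0) :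
    0 < w i :=
  hG.2.2 i (mem_union_left _ hi)

theorem IsInstance.pos_of_mem_right (hG : IsInstance I0 I1 F w) {j : V} (hj : j ∈ I1) :
    0 < w j :=
  hG.2.2 j (mem_union_right _ hj)

theorem IsRefinement0.mem_of_pos (ha : IsRefinement0 I0 F w a) {e : V × V} (he : 0 < a e) :
    e ∈ F := by
  by_contra h
  exact he.ne' (ha.2.1 e h)

theorem mem_closedNbr1 {S : Finset V} {i : V} :
    i ∈ closedNbr1 I0 F S ↔
      i ∈ I0 ∧ (∃ j, (i, j) ∈ F) ∧ ∀ j, (i, j) ∈ F → j ∈ S :=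
  mem_filter

theorem closedNbr1_empty : closedNbr1 I0 F ∅ = ∅ :=
  eq_empty_of_forall_notMem fun _ hi =>
    let ⟨_, ⟨j, hj⟩, hall⟩ := mem_closedNbr1.1 hi
    notMem_empty j (hall j hj)

theorem dens1_empty : dens1 I0 F w ∅ = 0 := by
  simp [dens1, closedNbr1_empty, wsum, eratio]

theorem dens1_of_pos {S : Finset V} (hS : 0 < wsum w S) :
    dens1 I0 F w S = ((wsum w (closedNbr1 I0 F S) / wsum w S : ℝ) : EReal) := by
  rw [dens1, eratio, if_neg hS.ne']

theorem sum_payload0 (S : Finset V) :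
    ∑ i ∈ S, payload0 F a i = ∑ e ∈ F, if e.1 ∈ S then a e else 0 := by
  simp only [payload0, sum_filter]
  rw [sum_comm]
  exact sum_congr rfl fun e _ => sum_ite_eq S e.1 fun _ => a e

theorem sum_payload1 (S : Finset V) :
    ∑ j ∈ S, payload1 F a j = ∑ e ∈ F, if e.2 ∈ S then a e else 0 := by
  simp only [payload1, sum_filter]
  rw [sum_comm]
  exact sum_congr rfl fun e _ => sum_ite_eq S e.2 fun _ => a e

theorem density1_nonneg (ha : IsRefinement0 I0 F w a) {j : V} (hj : 0 < w j) :
    0 ≤ density1 F w a j :=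
  div_nonneg (sum_nonneg fun e _ => ha.1 e) hj.le

theorem wsum_closedNbr1_eq_sum_payload0 (ha : IsRefinement0 I0 F w a) (S : Finset V) :
    wsum w (closedNbr1 I0 F S) = ∑ i ∈ closedNbr1 I0 F S, payload0 F a i :=
  sum_congr rfl fun i hi =>
    let ⟨hi0, hnb, _⟩ := mem_closedNbr1.1 hi
    (ha.2.2 i hi0 hnb).symm

theorem wsum_closedNbr1_le_sum_payload1 (ha : IsRefinement0 I0 F w a) (S : Finset V) :
    wsum w (closedNbr1 I0 F S) ≤ ∑ j ∈ S, payload1 F a j := by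
  rw [wsum_closedNbr1_eq_sum_payload0 ha, sum_payload0, sum_payload1]
  refine sum_le_sum fun e he => ?_
  by_cases h1 : e.1 ∈ closedNbr1 I0 F S
  · rw [if_pos h1, if_pos ((mem_closedNbr1.1 h1).2.2 e.2 he)]
  · rw [if_neg h1]
    exact ite_nonneg (ha.1 e) le_rfl

theorem exists_pos_of_mem_closedNbr1 (hG : IsInstance I0 I1 F w)
    (ha : IsRefinement0 I0 F w a) {S : Finset V} {i : V} (hi : i ∈ closedNbr1 I0 F S) :
    ∃ j ∈ S, 0 < a (i, j) := by
  obtain ⟨hi0, hnb, hall⟩ := mem_closedNbr1.1 hi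
  have hpay : ∑ _e ∈ F.filter (fun e => e.1 = i), (0 : ℝ) < payload0 F a i := by
    rw [sum_const_zero, ha.2.2 i hi0 hnb]
    exact hG.pos_of_mem_left hi0
  obtain ⟨e, he, hpos⟩ := exists_lt_of_sum_lt hpay
  obtain ⟨heF, rfl⟩ := mem_filter.1 he
  exact ⟨e.2, hall e.2 heF, hpos⟩

end Refinement

noncomputable def superlevel1 (I1 : Finset V) (F : Finset (V × V)) (w : V → ℝ)
    (a : V × V → ℝ) (t : ℝ) : Finset V :=
  I1.filter fun j => t ≤ density1 F w a j

section LocallyMaximin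

variable {I0 I1 : Finset V} {F : Finset (V × V)} {w : V → ℝ} {a : V × V → ℝ} {t : ℝ}

theorem fst_mem_closedNbr1_superlevel1 (hG : IsInstance I0 I1 F w) (hm : LocallyMaximin0 F w a)
    {e : V × V} (he : e ∈ F) (hpos : 0 < a e) (h2 : e.2 ∈ superlevel1 I1 F w a t) :
    e.1 ∈ closedNbr1 I0 F (superlevel1 I1 F w a t) :=
  mem_closedNbr1.2 ⟨hG.fst_mem he, ⟨e.2, he⟩, fun k hk =>
    mem_filter.2 ⟨hG.snd_mem hk, (mem_filter.1 h2).2.trans (hm e he hpos k hk)⟩⟩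

theorem sum_payload1_superlevel1_le (hG : IsInstance I0 I1 F w) (ha : IsRefinement0 I0 F w a)
    (hm : LocallyMaximin0 F w a) (t : ℝ) :
    ∑ j ∈ superlevel1 I1 F w a t, payload1 F a j
      ≤ wsum w (closedNbr1 I0 F (superlevel1 I1 F w a t)) := by
  rw [wsum_closedNbr1_eq_sum_payload0 ha, sum_payload0, sum_payload1]
  refine sum_le_sum fun e he => ?_
  rcases (ha.1 e).eq_or_lt with h0 | hpos
  · simp [← h0]
  · by_cases h2 : e.2 ∈ superlevel1 I1 F w a t
    · rw [if_pos h2, if_pos (fst_mem_closedNbr1_superlevel1 hG hm he hpos h2)]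
    · rw [if_neg h2]
      exact ite_nonneg hpos.le le_rfl

theorem sum_payload1_superlevel1 (hG : IsInstance I0 I1 F w) (ha : IsRefinement0 I0 F w a)
    (hm : LocallyMaximin0 F w a) (t : ℝ) :
    ∑ j ∈ superlevel1 I1 F w a t, payload1 F a j
      = wsum w (closedNbr1 I0 F (superlevel1 I1 F w a t)) :=
  (sum_payload1_superlevel1_le hG ha hm t).antisymm (wsum_closedNbr1_le_sum_payload1 ha _)

theorem mem_closedNbr1_superlevel1_iff (hG : IsInstance I0 I1 F w)
    (ha : IsRefinement0 I0 F w a) (hm : LocallyMaximin0 F w a) (i : V) :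
    i ∈ closedNbr1 I0 F (superlevel1 I1 F w a t) ↔
      ∃ j ∈ superlevel1 I1 F w a t, 0 < a (i, j) :=
  ⟨exists_pos_of_mem_closedNbr1 hG ha, fun ⟨_, hj, hpos⟩ =>
    fst_mem_closedNbr1_superlevel1 hG hm (ha.mem_of_pos hpos) hpos hj⟩

theorem density1_eq_on_superlevel1_of_le (hG : IsInstance I0 I1 F w)
    (ha : IsRefinement0 I0 F w a) (hm : LocallyMaximin0 F w a) {a' : V × V → ℝ}
    (ha' : IsRefinement0 I0 F w a')
    (hle : ∀ j ∈ superlevel1 I1 F w a t, density1 F w a' j ≤ density1 F w a j) :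
    ∀ j ∈ superlevel1 I1 F w a t, density1 F w a' j = density1 F w a j := by
  set S := superlevel1 I1 F w a t
  have hw : ∀ j ∈ S, 0 < w j := fun j hj => hG.pos_of_mem_right (mem_filter.1 hj).1
  have hpay : ∀ j ∈ S, payload1 F a' j ≤ payload1 F a j := fun j hj =>
    (div_le_div_iff_of_pos_right (hw j hj)).1 (hle j hj)
  have hsum : ∑ j ∈ S, payload1 F a' j = ∑ j ∈ S, payload1 F a j :=
    (sum_le_sum hpay).antisymm
      ((sum_payload1_superlevel1_le hG ha hm t).trans (wsum_closedNbr1_le_sum_payload1 ha' S))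
  exact fun j hj => congrArg (· / w j) ((sum_eq_sum_iff_of_le hpay).1 hsum j hj)

theorem density1_eq_of_forall_ne_imp_le (hG : IsInstance I0 I1 F w)
    (ha : IsRefinement0 I0 F w a) (hm : LocallyMaximin0 F w a) {a' : V × V → ℝ}
    (ha' : IsRefinement0 I0 F w a') {j₀ : V} (hj₀ : j₀ ∈ I1)
    (h : ∀ j ∈ I1, density1 F w a j ≠ density1 F w a' j →
      density1 F w a' j ≤ density1 F w a j₀) :
    density1 F w a' j₀ = density1 F w a j₀ := by
  refine density1_eq_on_superlevel1_of_le (t := density1 F w a j₀) hG ha hm ha' (fun j hj => ?_)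
    j₀ (mem_filter.2 ⟨hj₀, le_rfl⟩)
  obtain ⟨hj1, hjt⟩ := mem_filter.1 hj
  by_cases hne : density1 F w a j = density1 F w a' j
  · exact hne.ge
  · exact (h j hj1 hne).trans hjt

theorem density1_eq_of_locallyMaximin (hG : IsInstance I0 I1 F w)
    (ha : IsRefinement0 I0 F w a) (hm : LocallyMaximin0 F w a) {a' : V × V → ℝ}
    (ha' : IsRefinement0 I0 F w a') (hm' : LocallyMaximin0 F w a') :
    ∀ j ∈ I1, density1 F w a j = density1 F w a' j := by
  by_contra! ⟨j₁, hj₁, hne₁⟩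
  set D := I1.filter fun j => density1 F w a j ≠ density1 F w a' j
  obtain ⟨j₀, hj₀, hmax⟩ := D.exists_max_image
    (fun j => max (density1 F w a j) (density1 F w a' j))
    ⟨j₁, mem_filter.2 ⟨hj₁, hne₁⟩⟩
  obtain ⟨hj₀I, hne₀⟩ := mem_filter.1 hj₀
  have hbound : ∀ j ∈ I1, density1 F w a j ≠ density1 F w a' j →
      max (density1 F w a j) (density1 F w a' j) ≤
        max (density1 F w a j₀) (density1 F w a' j₀) :=
    fun j hj hne => hmax j (mem_filter.2 ⟨hj, hne⟩)
  rcases le_total (density1 F w a' j₀) (density1 F w a j₀) with hle | hle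
  · refine hne₀ (density1_eq_of_forall_ne_imp_le hG ha hm ha' hj₀I fun j hj hne => ?_).symm
    exact (le_max_right _ _).trans ((hbound j hj hne).trans (max_eq_left hle).le)
  · refine hne₀ (density1_eq_of_forall_ne_imp_le hG ha' hm' ha hj₀I fun j hj hne => ?_)
    exact (le_max_left _ _).trans ((hbound j hj (Ne.symm hne)).trans (max_eq_right hle).le)

end LocallyMaximin

section Densest

variable {I0 I1 : Finset V} {F : Finset (V × V)} {w : V → ℝ} {a : V × V → ℝ} {t : ℝ}

theorem dens1_le_of_density1_le (hG : IsInstance I0 I1 F w) (ha : IsRefinement0 I0 F w a)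
    (ht : 0 ≤ t) (hρ : ∀ j ∈ I1, density1 F w a j ≤ t) {S : Finset V} (hS : S ⊆ I1) :
    dens1 I0 F w S ≤ t := by
  rcases S.eq_empty_or_nonempty with rfl | hne
  · rw [dens1_empty]
    exact_mod_cast ht
  have hw : ∀ j ∈ S, 0 < w j := fun j hj => hG.pos_of_mem_right (hS hj)
  have hwS : 0 < wsum w S := sum_pos hw hne
  rw [dens1_of_pos hwS, EReal.coe_le_coe_iff, div_le_iff₀ hwS]
  calc wsum w (closedNbr1 I0 F S) ≤ ∑ j ∈ S, payload1 F a j :=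
        wsum_closedNbr1_le_sum_payload1 ha S
    _ ≤ ∑ j ∈ S, t * w j := sum_le_sum fun j hj =>
        mul_comm (w j) t ▸ (div_le_iff₀ (hw j hj)).1 (hρ j (hS hj))
    _ = t * wsum w S := (mul_sum S w t).symm

theorem density1_eq_of_mul_wsum_le (ha : IsRefinement0 I0 F w a) {S : Finset V}
    (hw : ∀ j ∈ S, 0 < w j) (hρ : ∀ j ∈ S, density1 F w a j ≤ t)
    (hS : t * wsum w S ≤ wsum w (closedNbr1 I0 F S)) :
    ∀ j ∈ S, density1 F w a j = t := by
  have hpay : ∀ j ∈ S, payload1 F a j ≤ t * w j := fun j hj =>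
    mul_comm (w j) t ▸ (div_le_iff₀ (hw j hj)).1 (hρ j hj)
  have hsum : ∑ j ∈ S, payload1 F a j = ∑ j ∈ S, t * w j := by
    refine (sum_le_sum hpay).antisymm ?_
    rw [← mul_sum]
    exact hS.trans (wsum_closedNbr1_le_sum_payload1 ha S)
  exact fun j hj => (div_eq_iff (hw j hj).ne').2 ((sum_eq_sum_iff_of_le hpay).1 hsum j hj)

theorem wsum_closedNbr1_superlevel1_of_le (hG : IsInstance I0 I1 F w)
    (ha : IsRefinement0 I0 F w a) (hm : LocallyMaximin0 F w a)
    (ht : ∀ j ∈ I1, density1 F w a j ≤ t) :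
    wsum w (closedNbr1 I0 F (superlevel1 I1 F w a t)) = t * wsum w (superlevel1 I1 F w a t) := by
  rw [← sum_payload1_superlevel1 hG ha hm, wsum, mul_sum]
  refine sum_congr rfl fun j hj => ?_
  obtain ⟨hj1, hjt⟩ := mem_filter.1 hj
  exact (div_eq_iff (hG.pos_of_mem_right hj1).ne').1 ((ht j hj1).antisymm hjt)

theorem IsMaxDensest1.eq_superlevel1 {S₁ : Finset V} (hS₁ : IsMaxDensest1 I0 I1 F w S₁)
    (hG : IsInstance I0 I1 F w) (ha : IsRefinement0 I0 F w a) (hm : LocallyMaximin0 F w a)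
    (ht : ∀ j ∈ I1, density1 F w a j ≤ t) (hne : (superlevel1 I1 F w a t).Nonempty) :
    S₁ = superlevel1 I1 F w a t := by
  obtain ⟨hsub, hdensest, hmaximal⟩ := hS₁
  set T := superlevel1 I1 F w a t
  have hT : T ⊆ I1 := filter_subset _ _
  have hw : ∀ j ∈ I1, 0 < w j := fun j hj => hG.pos_of_mem_right hj
  have ht₀ : 0 ≤ t :=
    let ⟨j, hj⟩ := hne
    (density1_nonneg ha (hw j (hT hj))).trans (ht j (hT hj))
  have hwT : 0 < wsum w T := sum_pos (fun j hj => hw j (hT hj)) hne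
  have hdensT : dens1 I0 F w T = t := by
    rw [dens1_of_pos hwT, wsum_closedNbr1_superlevel1_of_le hG ha hm ht,
      mul_div_cancel_right₀ _ hwT.ne']
  have hTS : T ⊆ S₁ := hmaximal T hT fun T' hT' =>
    hdensT ▸ dens1_le_of_density1_le hG ha ht₀ ht hT'
  have hwS : 0 < wsum w S₁ := sum_pos (fun j hj => hw j (hsub hj)) (hne.mono hTS)
  have hdensS : dens1 I0 F w S₁ = t :=
    (dens1_le_of_density1_le hG ha ht₀ ht hsub).antisymm (hdensT ▸ hdensest T hT)
  rw [dens1_of_pos hwS, EReal.coe_eq_coe_iff, div_eq_iff hwS.ne'] at hdensS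
  have hρ := density1_eq_of_mul_wsum_le ha (fun j hj => hw j (hsub hj))
    (fun j hj => ht j (hsub hj)) hdensS.ge
  exact Subset.antisymm (fun j hj => mem_filter.2 ⟨hsub hj, (hρ j hj).ge⟩) hTS

theorem IsMaxDensest1.density1_eq_and_mem_closedNbr1_iff {S₁ : Finset V}
    (hS₁ : IsMaxDensest1 I0 I1 F w S₁) (hG : IsInstance I0 I1 F w)
    (ha : IsRefinement0 I0 F w a) (hm : LocallyMaximin0 F w a) :
    (∀ j ∈ S₁, density1 F w a j = wsum w (closedNbr1 I0 F S₁) / wsum w S₁) ∧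
      ∀ i, i ∈ closedNbr1 I0 F S₁ ↔ ∃ j ∈ S₁, 0 < a (i, j) := by
  rcases S₁.eq_empty_or_nonempty with rfl | ⟨j₀, hj₀⟩
  · simp [closedNbr1_empty]
  have hI1 : I1.Nonempty := ⟨j₀, hS₁.1 hj₀⟩
  set t := I1.sup' hI1 (density1 F w a)
  have ht : ∀ j ∈ I1, density1 F w a j ≤ t := fun j hj => le_sup' _ hj
  obtain ⟨jm, hjm, hjmt⟩ := exists_mem_eq_sup' hI1 (density1 F w a)
  obtain rfl := hS₁.eq_superlevel1 hG ha hm ht ⟨jm, mem_filter.2 ⟨hjm, hjmt.le⟩⟩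
  refine ⟨fun j hj => ?_, mem_closedNbr1_superlevel1_iff hG ha hm⟩
  have hwS : 0 < wsum w (superlevel1 I1 F w a t) :=
    sum_pos (fun j hj => hG.pos_of_mem_right (mem_filter.1 hj).1) ⟨j₀, hj₀⟩
  rw [wsum_closedNbr1_superlevel1_of_le hG ha hm ht, mul_div_cancel_right₀ _ hwS.ne']
  exact (ht j (mem_filter.1 hj).1).antisymm (mem_filter.1 hj).2

end Densest

section Restrict

variable {I0 I1 I0' I1' : Finset V} {F F' : Finset (V × V)} {w : V → ℝ} {a : V × V → ℝ}

theorem mem_restrictF {e : V × V} :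
    e ∈ restrictF F I0' I1' ↔ e ∈ F ∧ e.1 ∈ I0' ∧ e.2 ∈ I1' :=
  mem_filter

theorem restrictF_subset : restrictF F I0' I1' ⊆ F :=
  filter_subset _ _

theorem IsInstance.restrict (hG : IsInstance I0 I1 F w) (h0 : I0' ⊆ I0) (h1 : I1' ⊆ I1) :
    IsInstance I0' I1' (restrictF F I0' I1') w :=
  ⟨hG.1.mono h0 h1, fun _ he => (mem_restrictF.1 he).2,
    fun v hv => hG.2.2 v (union_subset_union h0 h1 hv)⟩

theorem payload0_indicator_of_subset (hF : F' ⊆ F) {i : V}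
    (h : ∀ e ∈ F, e.1 = i → e ∉ F' → a e = 0) :
    payload0 F' ((F' : Set (V × V)).indicator a) i = payload0 F a i := by
  unfold payload0
  rw [sum_congr rfl fun e he => Set.indicator_of_mem (mem_coe.2 (mem_filter.1 he).1) a]
  refine sum_subset (filter_subset_filter _ hF) fun e he he' => ?_
  obtain ⟨heF, he1⟩ := mem_filter.1 he
  exact h e heF he1 fun h' => he' (mem_filter.2 ⟨h', he1⟩)

theorem payload1_indicator_of_subset (hF : F' ⊆ F) {j : V}
    (h : ∀ e ∈ F, e.2 = j → e ∉ F' → a e = 0) :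
    payload1 F' ((F' : Set (V × V)).indicator a) j = payload1 F a j := by
  unfold payload1
  rw [sum_congr rfl fun e he => Set.indicator_of_mem (mem_coe.2 (mem_filter.1 he).1) a]
  refine sum_subset (filter_subset_filter _ hF) fun e he he' => ?_
  obtain ⟨heF, he2⟩ := mem_filter.1 he
  exact h e heF he2 fun h' => he' (mem_filter.2 ⟨h', he2⟩)

theorem IsRefinement0.restrict (ha : IsRefinement0 I0 F w a) (h0 : I0' ⊆ I0)
    (hout : ∀ e ∈ F, e.1 ∈ I0' → 0 < a e → e.2 ∈ I1') :
    IsRefinement0 I0' (restrictF F I0' I1') w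
      ((restrictF F I0' I1' : Set (V × V)).indicator a) := by
  refine ⟨Set.indicator_nonneg fun e _ => ha.1 e,
    fun e he => Set.indicator_of_notMem (mt mem_coe.1 he) a, fun i hi ⟨j, hij⟩ => ?_⟩
  rw [payload0_indicator_of_subset restrictF_subset]
  · exact ha.2.2 i (h0 hi) ⟨j, (mem_restrictF.1 hij).1⟩
  intro e he he1 he'
  by_contra hne
  exact he' (mem_restrictF.2 ⟨he, he1 ▸ hi, hout e he (he1 ▸ hi) ((ha.1 e).lt_of_ne' hne)⟩)

theorem density1_indicator_restrictF (hin : ∀ e ∈ F, e.2 ∈ I1' → e.1 ∈ I0') {j : V}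
    (hj : j ∈ I1') :
    density1 (restrictF F I0' I1') w ((restrictF F I0' I1' : Set (V × V)).indicator a) j
      = density1 F w a j := by
  unfold density1
  rw [payload1_indicator_of_subset restrictF_subset fun e he he2 he' =>
    absurd (mem_restrictF.2 ⟨he, hin e he (he2 ▸ hj), he2 ▸ hj⟩) he']

theorem LocallyMaximin0.restrict (hm : LocallyMaximin0 F w a)
    (hin : ∀ e ∈ F, e.2 ∈ I1' → e.1 ∈ I0') :
    LocallyMaximin0 (restrictF F I0' I1') w
      ((restrictF F I0' I1' : Set (V × V)).indicator a) := by
  intro e he hpos k hk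
  rw [density1_indicator_restrictF hin (mem_restrictF.1 he).2.2,
    density1_indicator_restrictF hin (mem_restrictF.1 hk).2.2]
  rw [Set.indicator_of_mem (mem_coe.2 he)] at hpos
  exact hm e (mem_restrictF.1 he).1 hpos k (mem_restrictF.1 hk).1

theorem indicator_restrictF_pos_iff (ha : IsRefinement0 I0 F w a)
    (hin : ∀ e ∈ F, e.2 ∈ I1' → e.1 ∈ I0') {i j : V} (hj : j ∈ I1') :
    0 < (restrictF F I0' I1' : Set (V × V)).indicator a (i, j) ↔ 0 < a (i, j) := by
  by_cases h : (i, j) ∈ restrictF F I0' I1'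
  · rw [Set.indicator_of_mem (mem_coe.2 h)]
  rw [Set.indicator_of_notMem (mt mem_coe.1 h)]
  refine iff_of_false (lt_irrefl 0) fun hpos => h ?_
  have hF := ha.mem_of_pos hpos
  exact mem_restrictF.2 ⟨hF, hin _ hF hj, hj⟩

end Restrict

section Decomposition

variable {I0 I1 : Finset V} {F : Finset (V × V)} {w : V → ℝ} {a : V × V → ℝ}
  {L : List (Finset V × Finset V)}

theorem IsDecomp1.snd_subset (hL : IsDecomp1 w I0 I1 F L) : ∀ q ∈ L, q.2 ⊆ I1 := by
  induction L generalizing I0 I1 F with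
  | nil => simp
  | cons p L ih =>
    obtain ⟨-, hmax, -, hL⟩ := hL
    exact List.forall_mem_cons.2 ⟨hmax.1, fun q hq => (ih hL q hq).trans sdiff_subset⟩

theorem IsDecomp1.density1_eq_and_mem_iff (hL : IsDecomp1 w I0 I1 F L)
    (hG : IsInstance I0 I1 F w) (ha : IsRefinement0 I0 F w a) (hm : LocallyMaximin0 F w a) :
    ∀ p ∈ L, (∀ j ∈ p.2, density1 F w a j = wsum w p.1 / wsum w p.2) ∧
      ∀ i, i ∈ p.1 ↔ ∃ j ∈ p.2, 0 < a (i, j) := by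
  induction L generalizing I0 I1 F a with
  | nil => simp
  | cons p L ih =>
    obtain ⟨S₀, S₁⟩ := p
    obtain ⟨-, hmax, hS₀, hL⟩ := hL
    dsimp only at hmax hS₀ hL
    subst hS₀
    have hblock := hmax.density1_eq_and_mem_closedNbr1_iff hG ha hm
    have hin : ∀ e ∈ F, e.2 ∈ I1 \ S₁ → e.1 ∈ I0 \ closedNbr1 I0 F S₁ :=
      fun e he h2 => mem_sdiff.2 ⟨hG.fst_mem he, fun h1 =>
        (mem_sdiff.1 h2).2 ((mem_closedNbr1.1 h1).2.2 e.2 he)⟩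
    have hout : ∀ e ∈ F, e.1 ∈ I0 \ closedNbr1 I0 F S₁ → 0 < a e → e.2 ∈ I1 \ S₁ :=
      fun e he h1 hpos => mem_sdiff.2
        ⟨hG.snd_mem he, fun h2 => (mem_sdiff.1 h1).2 ((hblock.2 e.1).2 ⟨e.2, h2, hpos⟩)⟩
    have hrest := ih hL (hG.restrict sdiff_subset sdiff_subset) (ha.restrict sdiff_subset hout)
      (hm.restrict hin)
    refine List.forall_mem_cons.2 ⟨hblock, fun q hq => ?_⟩
    have hq₂ := hL.snd_subset q hq
    obtain ⟨hρ, hsupp⟩ := hrest q hq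
    exact ⟨fun j hj => (density1_indicator_restrictF hin (hq₂ hj)).symm.trans (hρ j hj),
      fun i => (hsupp i).trans (exists_congr fun j => and_congr_right fun hj =>
        indicator_restrictF_pos_iff ha hin (hq₂ hj))⟩

end Decomposition

/-- **A locally maximin refinement realizes the density decomposition.**
Let `a` be a locally maximin refinement of the side-0 weights, inducing payload densities
`ρ` on `I1`.  Then for any density decomposition `L` of `G` with ground set `I1`:
every `j ∈ S¹_ℓ` has `ρ(j) = w(S⁰_ℓ)/w(S¹_ℓ)`, and `S⁰_ℓ` is exactly the set of vertices
sending positive weight into `S¹_ℓ`.  Moreover, any two locally maximin refinements of the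
side-0 weights induce the same payload density vector on `I1`. -/
theorem locally_maximin_gives_density_decomposition
    (I0 I1 : Finset V) (F : Finset (V × V)) (w : V → ℝ)
    (hG : IsInstance I0 I1 F w)
    (a : V × V → ℝ)
    (ha : IsRefinement0 I0 F w a) (hm : LocallyMaximin0 F w a) :
    (∀ L : List (Finset V × Finset V), IsDecomp1 w I0 I1 F L →
      (∀ p ∈ L, ∀ j ∈ p.2, density1 F w a j = wsum w p.1 / wsum w p.2) ∧
      (∀ p ∈ L, ∀ i : V, i ∈ p.1 ↔ ∃ j ∈ p.2, 0 < a (i, j))) ∧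
    (∀ a' : V × V → ℝ, IsRefinement0 I0 F w a' → LocallyMaximin0 F w a' →
      ∀ j ∈ I1, density1 F w a j = density1 F w a' j) := by
  refine ⟨fun L hL => ?_, fun a' ha' hm' => density1_eq_of_locallyMaximin hG ha hm ha' hm'⟩
  have hblocks := hL.density1_eq_and_mem_iff hG ha hm
  exact ⟨fun p hp => (hblocks p hp).1, fun p hp => (hblocks p hp).2⟩
end

section
/- Consider a bipartite Arrow-Debreu market on I = I⁰ ⊎ I¹ in which every agent has a mutually interested agent on the other side (for every i there exists j on the other side with w_i(j)·w_j(i) > 0). Let ι ∈ {0,1} and let x^ι be a side-ι allocation satisfying the local maximin condition at every agent of I^ι. Then every agent of I^ι̅ receives positive utility from x^ι, so the proportional response x^ι̅ of x^ι is unique; moreover: (1) the allocation x^ι̅ satisfies the local maximin condition at every agent of I^ι̅ (with utilities computed from the pair (x^ι, x^ι̅)); and (2) the proportional response of x^ι̅ equals x^ι. -/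
open Finset

/-- Extended-real ratio with the convention `a/0 = +∞`. -/
noncomputable def ratioInf (a b : ℝ) : EReal :=
  if b = 0 then ⊤ else ((a / b : ℝ) : EReal)

variable {A : Type*} [Fintype A]

/-- Utility of agent `k` under the allocation `x` (`x l k` is the fraction of good `l`
assigned to `k`), with valuations `w`. -/
noncomputable def util (w x : A → A → ℝ) (k : A) : ℝ := ∑ l, w k l * x l k

/-- `x` is a side-`ι` allocation: each agent of side `ι` completely distributes one unit
of its own good among the agents of the other side; all other entries vanish. -/
def SideAlloc (side : A → Bool) (ι : Bool) (x : A → A → ℝ) : Prop :=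
  (∀ i j, 0 ≤ x i j) ∧
  (∀ i, side i ≠ ι → ∀ j, x i j = 0) ∧
  (∀ i j, side j = ι → x i j = 0) ∧
  (∀ i, side i = ι → ∑ j, x i j = 1)

/-- The allocation `x` satisfies the local maximin condition at every agent of side `ι`:
`x i j > 0` only if `j` minimizes `u_k(x)/(w_k(i)·w_i(k))` over agents `k` of the other
side, with the convention `a/0 = +∞`. -/
def LocMaximin (side : A → Bool) (w : A → A → ℝ) (ι : Bool) (x : A → A → ℝ) : Prop :=
  ∀ i, side i = ι → ∀ j, 0 < x i j → ∀ k, side k ≠ ι →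
    ratioInf (util w x j) (w j i * w i j) ≤ ratioInf (util w x k) (w k i * w i k)

/-- `y` is the proportional response to the side-`ι` allocation `x`:
`y j i = w_j(i)·x_{i→j} / u_j(x)` for `j` of side `ι̅` and `i` of side `ι`. -/
def IsPRof (side : A → Bool) (w : A → A → ℝ) (ι : Bool) (x y : A → A → ℝ) : Prop :=
  (∀ j, side j = ι → ∀ i, y j i = 0) ∧
  (∀ j, side j ≠ ι → ∀ i, side i ≠ ι → y j i = 0) ∧
  (∀ j, side j ≠ ι → ∀ i, side i = ι → y j i = w j i * x i j / util w x j)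


/-!
At an agent `i` of side `ι`, the local maximin condition says that the ratio
`u_k(x) / (w_k(i)·w_i(k))` attains its minimum `c_i` at every agent receiving part of good `i`.
This minimum is finite, by mutual interest, and positive: an agent `j` with `u_j(x) = 0` and
`w_i(j)·w_j(i) > 0` would force `c_i = 0`, while every recipient `l` of good `i` has
`u_l(x) ≥ w_l(i)·x_{i→l} > 0`. The proportional response `y` then gives `i` the utility
`Σ_l w_i(l)·w_l(i)·x_{i→l} / u_l(x) = Σ_l x_{i→l} / c_i = 1 / c_i`. So at an agent `j` of the
other side the ratio `u_i(y) / (w_i(j)·w_j(i))` equals `1 / u_j(x)` when `x_{i→j} > 0`, and is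
at least `1 / u_j(x)` for every `i`: this is the local maximin condition for `y`. The identity
`u_l(x) = c_i·w_l(i)·w_i(l)` on the support of `x` also shows that responding to `y` returns `x`.
-/

theorem ratioInf_zero (a : ℝ) : ratioInf a 0 = ⊤ := if_pos rfl

theorem ratioInf_le_ratioInf_iff {a b c d : ℝ} (hd : d ≠ 0) :
    ratioInf a b ≤ ratioInf c d ↔ b ≠ 0 ∧ a / b ≤ c / d := by
  by_cases hb : b = 0 <;> simp [ratioInf, hb, hd]

section

variable {side : A → Bool} {w : A → A → ℝ} {ι : Bool} {x y : A → A → ℝ}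

theorem util_nonneg (hw : ∀ i j, 0 ≤ w i j) (hx : ∀ i j, 0 ≤ x i j) (k : A) :
    0 ≤ util w x k :=
  sum_nonneg fun l _ => mul_nonneg (hw k l) (hx l k)

theorem mul_le_util (hw : ∀ i j, 0 ≤ w i j) (hx : ∀ i j, 0 ≤ x i j) (k l : A) :
    w k l * x l k ≤ util w x k :=
  single_le_sum (f := fun m => w k m * x m k) (fun m _ => mul_nonneg (hw k m) (hx m k))
    (mem_univ l)

namespace SideAlloc

theorem side_ne_of_pos (hx : SideAlloc side ι x) {i j : A} (hij : 0 < x i j) : side j ≠ ι :=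
  fun hj => hij.ne' (hx.2.2.1 i j hj)

theorem exists_pos (hx : SideAlloc side ι x) {i : A} (hi : side i = ι) : ∃ l, 0 < x i l := by
  by_contra! h
  have hzero : ∀ l, x i l = 0 := fun l => (h l).antisymm (hx.1 i l)
  simpa [hzero] using hx.2.2.2 i hi

theorem util_add_of_side_eq (hx : SideAlloc side ι x) {m : A} (hm : side m = ι) :
    util w (fun l m => x l m + y l m) m = util w y m := by
  simp only [util, hx.2.2.1 _ m hm, zero_add]

end SideAlloc

/-- `c` is the minimum `c_i` of the ratios `u_k(x) / (w_k(i)·w_i(k))` in the local maximin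
condition at `i`, written without division. -/
def IsMaximinLevel (side : A → Bool) (w x : A → A → ℝ) (ι : Bool) (i : A) (c : ℝ) : Prop :=
  (∀ l, 0 < x i l → w l i * w i l ≠ 0 ∧ util w x l = c * (w l i * w i l)) ∧
  ∀ k, side k ≠ ι → c * (w k i * w i k) ≤ util w x k

namespace LocMaximin

theorem util_pos (hw : ∀ i j, 0 ≤ w i j) (hmut : ∀ i, ∃ j, side j ≠ side i ∧ 0 < w i j * w j i)
    (hx : SideAlloc side ι x) (hmax : LocMaximin side w ι x) {j : A} (hj : side j ≠ ι) :
    0 < util w x j := by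
  refine (util_nonneg hw hx.1 j).lt_of_ne' fun hzero => ?_
  obtain ⟨i, hij, hwij⟩ := hmut j
  have hi : side i = ι := by
    rw [Bool.eq_not_iff.mpr hj] at hij
    simpa using hij
  obtain ⟨l, hl⟩ := hx.exists_pos hi
  obtain ⟨hdl, hratio⟩ := (ratioInf_le_ratioInf_iff hwij.ne').mp (hmax i hi l hl j hj)
  have hdl_pos : 0 < w l i * w i l := (mul_nonneg (hw l i) (hw i l)).lt_of_ne' hdl
  have hwli : 0 < w l i := pos_of_mul_pos_left hdl_pos (hw i l)
  rw [hzero, zero_div, div_nonpos_iff] at hratio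
  have hul : 0 < util w x l := (mul_pos hwli hl).trans_le (mul_le_util hw hx.1 l i)
  rcases hratio with ⟨-, h⟩ | ⟨h, -⟩ <;> linarith

theorem exists_isMaximinLevel (hw : ∀ i j, 0 ≤ w i j)
    (hmut : ∀ i, ∃ j, side j ≠ side i ∧ 0 < w i j * w j i) (hx : SideAlloc side ι x)
    (hmax : LocMaximin side w ι x) {i : A} (hi : side i = ι) :
    ∃ c, 0 < c ∧ IsMaximinLevel side w x ι i c := by
  obtain ⟨l₀, hl₀⟩ := hx.exists_pos hi
  have hl₀ι := hx.side_ne_of_pos hl₀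
  obtain ⟨k, hki, hwik⟩ := hmut i
  have hkι : side k ≠ ι := hi ▸ hki
  obtain ⟨hd₀, -⟩ := (ratioInf_le_ratioInf_iff (by rw [mul_comm]; exact hwik.ne')).mp
    (hmax i hi l₀ hl₀ k hkι)
  have hd₀_pos : 0 < w l₀ i * w i l₀ := (mul_nonneg (hw l₀ i) (hw i l₀)).lt_of_ne' hd₀
  refine ⟨util w x l₀ / (w l₀ i * w i l₀), div_pos (hmax.util_pos hw hmut hx hl₀ι) hd₀_pos,
    fun l hl => ?_, fun k hk => ?_⟩
  · obtain ⟨hd, hle⟩ := (ratioInf_le_ratioInf_iff hd₀).mp (hmax i hi l hl l₀ hl₀ι)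
    have hge := ((ratioInf_le_ratioInf_iff hd).mp (hmax i hi l₀ hl₀ l (hx.side_ne_of_pos hl))).2
    exact ⟨hd, (div_eq_iff hd).mp (hle.antisymm hge)⟩
  · by_cases hd : w k i * w i k = 0
    · simpa [hd] using util_nonneg hw hx.1 k
    · have hd_pos : 0 < w k i * w i k := (mul_nonneg (hw k i) (hw i k)).lt_of_ne' hd
      exact (le_div_iff₀ hd_pos).mp ((ratioInf_le_ratioInf_iff hd).mp (hmax i hi l₀ hl₀ k hk)).2

end LocMaximin

noncomputable def propResp (side : A → Bool) (w x : A → A → ℝ) (ι : Bool) : A → A → ℝ :=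
  fun j i => if side j ≠ ι ∧ side i = ι then w j i * x i j / util w x j else 0

theorem isPRof_iff_eq_propResp : IsPRof side w ι x y ↔ y = propResp side w x ι := by
  constructor
  · rintro ⟨hy₁, hy₂, hy₃⟩
    funext j i
    by_cases hj : side j = ι
    · simp [propResp, hj, hy₁ j hj i]
    · by_cases hi : side i = ι
      · simp [propResp, hj, hi, hy₃ j hj i hi]
      · simp [propResp, hj, hi, hy₂ j hj i hi]
  · rintro rfl
    refine ⟨fun j hj i => ?_, fun j hj i hi => ?_, fun j hj i hi => ?_⟩ <;> simp [propResp, *]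

namespace IsPRof

theorem apply_eq (hx : SideAlloc side ι x) (hy : IsPRof side w ι x y) {j : A} (hj : side j ≠ ι)
    (i : A) : y j i = w j i * x i j / util w x j := by
  by_cases hi : side i = ι
  · exact hy.2.2 j hj i hi
  · rw [hy.2.1 j hj i hi, hx.2.1 i hi j, mul_zero, zero_div]

theorem sideAlloc (hw : ∀ i j, 0 ≤ w i j) (hx : SideAlloc side ι x)
    (hpos : ∀ j, side j ≠ ι → 0 < util w x j) (hy : IsPRof side w ι x y) :
    SideAlloc side (!ι) y := by
  refine ⟨fun j i => ?_, fun j hj i => hy.1 j (Bool.ne_not.mp hj) i,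
    fun j i hi => ?_, fun j hj => ?_⟩
  · by_cases hj : side j = ι
    · rw [hy.1 j hj i]
    · rw [hy.apply_eq hx hj i]
      exact div_nonneg (mul_nonneg (hw j i) (hx.1 i j)) (util_nonneg hw hx.1 j)
  · by_cases hj : side j = ι
    · exact hy.1 j hj i
    · exact hy.2.1 j hj i (Bool.eq_not_iff.mp hi)
  · have hj' : side j ≠ ι := Bool.eq_not_iff.mp hj
    simp_rw [hy.apply_eq hx hj', ← sum_div]
    exact div_self (hpos j hj').ne'

theorem util_eq (hx : SideAlloc side ι x) (hy : IsPRof side w ι x y) {i : A} (hi : side i = ι)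
    {c : ℝ} (hc : 0 < c) (hlevel : IsMaximinLevel side w x ι i c) : util w y i = 1 / c := by
  have hterm : ∀ l, w i l * y l i = x i l / c := by
    intro l
    by_cases hl : side l = ι
    · rw [hy.1 l hl i, hx.2.2.1 i l hl, mul_zero, zero_div]
    rcases (hx.1 i l).eq_or_lt with hzero | hil
    · rw [hy.2.2 l hl i hi, ← hzero, mul_zero, zero_div, mul_zero, zero_div]
    · obtain ⟨hd, hu⟩ := hlevel.1 l hil
      have hd' : w i l * w l i ≠ 0 := by rwa [mul_comm]
      rw [hy.2.2 l hl i hi, hu]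
      field_simp
      exact div_self hd'
  rw [util, sum_congr rfl fun l _ => hterm l, ← sum_div, hx.2.2.2 i hi]

theorem locMaximin_add (hw : ∀ i j, 0 ≤ w i j) (hx : SideAlloc side ι x)
    (hy : IsPRof side w ι x y)
    (hlevel : ∀ i, side i = ι → ∃ c, 0 < c ∧ IsMaximinLevel side w x ι i c) :
    LocMaximin side w (!ι) (fun l m => x l m + y l m) := by
  intro j hj i hji k hk
  have hj' : side j ≠ ι := Bool.eq_not_iff.mp hj
  have hk' : side k = ι := Bool.ne_not.mp hk
  simp only [hx.2.1 j hj' i, zero_add] at hji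
  have hi : side i = ι := by
    by_contra hi
    exact hji.ne' (hy.2.1 j hj' i hi)
  have hij : 0 < x i j := by
    refine (hx.1 i j).lt_of_ne fun hzero => hji.ne' ?_
    rw [hy.2.2 j hj' i hi, ← hzero, mul_zero, zero_div]
  obtain ⟨cᵢ, hcᵢ, hlevelᵢ⟩ := hlevel i hi
  obtain ⟨cₖ, hcₖ, hlevelₖ⟩ := hlevel k hk'
  obtain ⟨hdij, huj⟩ := hlevelᵢ.1 j hij
  rw [hx.util_add_of_side_eq hi, hy.util_eq hx hi hcᵢ hlevelᵢ,
    hx.util_add_of_side_eq hk', hy.util_eq hx hk' hcₖ hlevelₖ]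
  by_cases hdk : w k j * w j k = 0
  · rw [hdk, ratioInf_zero]
    exact le_top
  have hdk_pos : 0 < w k j * w j k := (mul_nonneg (hw k j) (hw j k)).lt_of_ne' hdk
  refine (ratioInf_le_ratioInf_iff hdk).mpr ⟨by rwa [mul_comm], ?_⟩
  rw [div_div, div_div, mul_comm (w i j), ← huj]
  refine one_div_le_one_div_of_le (by positivity) ?_
  simpa [mul_comm (w k j)] using hlevelₖ.2 j hj'

theorem symm (hx : SideAlloc side ι x) (hy : IsPRof side w ι x y)
    (hlevel : ∀ i, side i = ι → ∃ c, 0 < c ∧ IsMaximinLevel side w x ι i c) :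
    IsPRof side w (!ι) y x := by
  refine ⟨fun j hj i => hx.2.1 j (Bool.eq_not_iff.mp hj) i,
    fun j _ i hi => hx.2.2.1 j i (Bool.ne_not.mp hi), fun j hj i hi => ?_⟩
  have hj' : side j = ι := Bool.ne_not.mp hj
  obtain ⟨c, hc, hlevelⱼ⟩ := hlevel j hj'
  rw [hy.util_eq hx hj' hc hlevelⱼ, hy.2.2 i (Bool.eq_not_iff.mp hi) j hj']
  rcases (hx.1 j i).eq_or_lt with hzero | hji
  · simp [← hzero]
  · obtain ⟨hd, hu⟩ := hlevelⱼ.1 i hji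
    have hd' : w j i * w i j ≠ 0 := by rwa [mul_comm]
    rw [hu]
    field_simp
    exact (div_self hd').symm

end IsPRof

end

theorem prop_resp_locally_maximin_bipartite_AD_general
    (side : A → Bool) (w : A → A → ℝ)
    (hw : ∀ i j, 0 ≤ w i j)
    (hmut : ∀ i, ∃ j, side j ≠ side i ∧ 0 < w i j * w j i)
    (ι : Bool) (x : A → A → ℝ)
    (hx : SideAlloc side ι x)
    (hmax : LocMaximin side w ι x) :
    (∀ j, side j ≠ ι → 0 < util w x j) ∧
    (∃! y, IsPRof side w ι x y) ∧
    ∀ y, IsPRof side w ι x y →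
      SideAlloc side (!ι) y ∧
      LocMaximin side w (!ι) (fun l m => x l m + y l m) ∧
      IsPRof side w (!ι) y x := by
  have hpos : ∀ j, side j ≠ ι → 0 < util w x j := fun j => hmax.util_pos hw hmut hx
  have hlevel : ∀ i, side i = ι → ∃ c, 0 < c ∧ IsMaximinLevel side w x ι i c :=
    fun i => hmax.exists_isMaximinLevel hw hmut hx
  refine ⟨hpos, ⟨propResp side w x ι, isPRof_iff_eq_propResp.mpr rfl,
    fun y hy => isPRof_iff_eq_propResp.mp hy⟩, fun y hy => ?_⟩
  exact ⟨hy.sideAlloc hw hx hpos, hy.locMaximin_add hw hx hlevel, hy.symm hx hlevel⟩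

/-- **Proportional response to a locally maximin allocation (bipartite Arrow-Debreu).**
In a bipartite Arrow-Debreu market in which every agent has a mutually interested agent on
the other side, let `x` be a side-`ι` allocation satisfying the local maximin condition at
every agent of side `ι`.  Then every agent of the other side receives positive utility from
`x` (so the proportional response of `x` is unique), and for the proportional response `y`:
(1) `y` satisfies the local maximin condition at every agent of side `ι̅` (with utilities
computed from the combined pair), and (2) the proportional response of `y` is `x`. -/
theorem prop_resp_locally_maximin_bipartite_AD
    (side : A → Bool) (w : A → A → ℝ)
    (hw : ∀ i j, 0 ≤ w i j)
    (hbip : ∀ i j, side i = side j → w i j = 0)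
    (hmut : ∀ i, ∃ j, side j ≠ side i ∧ 0 < w i j * w j i)
    (ι : Bool) (x : A → A → ℝ)
    (hx : SideAlloc side ι x)
    (hmax : LocMaximin side w ι x) :
    (∀ j, side j ≠ ι → 0 < util w x j) ∧
    (∃! y, IsPRof side w ι x y) ∧
    ∀ y, IsPRof side w ι x y →
      SideAlloc side (!ι) y ∧
      LocMaximin side w (!ι) (fun l m => x l m + y l m) ∧
      IsPRof side w (!ι) y x :=
  prop_resp_locally_maximin_bipartite_AD_general side w hw hmut ι x hx hmax
end

section
/- Let H = (V, E) be a hypergraph with positive node weights and positive edge weights, and let α* ∈ K(H) be a minimizer of the objective Q over K(H), with induced density vector ρ*. Then for every α ∈ K(H) with induced density vector ρ, ‖ρ − ρ*‖_w² ≤ Q(α) − Q(α*). -/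
/-!
Let `p*` and `q` be the payloads of `α*` and `α`. Expanding the square,
`Q(α) - Q(α*) = 2 Σ p*_i (q_i - p*_i) / w_i + Σ (q_i - p*_i)² / w_i`, and the last sum is
`‖ρ - ρ*‖_w²`. Since `K(H)` is convex and `Q` is quadratic along the segment from `α*` to `α`,
minimality of `α*` forces the linear term to be nonnegative.
-/

open Finset

variable {V : Type*} [DecidableEq V] [Fintype V]

/-- `a ∈ K(H)`: each hyperedge `e` distributes its weight `wE e` among its own nodes. -/
def InK (E : Finset (Finset V)) (wE : Finset V → ℝ) (a : Finset V → V → ℝ) : Prop :=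
  (∀ e i, 0 ≤ a e i) ∧ (∀ e ∈ E, ∀ i, i ∉ e → a e i = 0) ∧
    ∀ e ∈ E, ∑ i ∈ e, a e i = wE e

/-- Payload `p_i = Σ_{e ∋ i} a_{e→i}` received by node `i`. -/
noncomputable def hPayload (E : Finset (Finset V)) (a : Finset V → V → ℝ) (i : V) : ℝ :=
  ∑ e ∈ E, a e i

/-- Density `ρ_i = p_i / w_i` of node `i`. -/
noncomputable def hDensity (E : Finset (Finset V)) (wV : V → ℝ)
    (a : Finset V → V → ℝ) (i : V) : ℝ :=
  hPayload E a i / wV i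

/-- Quadratic objective `Q(a) = Σ_i p_i² / w_i`. -/
noncomputable def Qobj (E : Finset (Finset V)) (wV : V → ℝ) (a : Finset V → V → ℝ) : ℝ :=
  ∑ i, hPayload E a i ^ 2 / wV i

open Filter Topology

theorem nonneg_of_forall_mul_add_sq_mul_nonneg {b c : ℝ}
    (h : ∀ t ∈ Set.Ioc (0 : ℝ) 1, 0 ≤ t * b + t ^ 2 * c) : 0 ≤ b := by
  have hlin : ∀ t ∈ Set.Ioc (0 : ℝ) 1, 0 ≤ b + t * c := fun t ht =>
    nonneg_of_mul_nonneg_right (by linarith [h t ht]) ht.1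
  have hlim : Tendsto (fun t : ℝ => b + t * c) (𝓝[>] 0) (𝓝 b) :=
    tendsto_nhdsWithin_of_tendsto_nhds <|
      (continuous_const.add (continuous_id.mul continuous_const)).tendsto' _ _ (by simp)
  exact ge_of_tendsto hlim (eventually_of_mem (Ioc_mem_nhdsGT one_pos) hlin)

theorem sum_sq_div_sub_sum_sq_div {ι : Type*} (s : Finset ι) (p q w : ι → ℝ) :
    ∑ i ∈ s, q i ^ 2 / w i - ∑ i ∈ s, p i ^ 2 / w i =
      2 * ∑ i ∈ s, p i * (q i - p i) / w i + ∑ i ∈ s, (q i - p i) ^ 2 / w i := by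
  rw [← sum_sub_distrib, mul_sum, ← sum_add_distrib]
  exact sum_congr rfl fun i _ => by ring

theorem convex_setOf_inK {V : Type*} (E : Finset (Finset V)) (wE : Finset V → ℝ) :
    Convex ℝ {a | InK E wE a} := by
  rintro a ⟨ha_nonneg, ha_supp, ha_sum⟩ b ⟨hb_nonneg, hb_supp, hb_sum⟩ s t hs ht hst
  refine ⟨fun e i => ?_, fun e he i hi => ?_, fun e he => ?_⟩
  · simp only [Pi.add_apply, Pi.smul_apply, smul_eq_mul]
    exact add_nonneg (mul_nonneg hs (ha_nonneg e i)) (mul_nonneg ht (hb_nonneg e i))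
  · simp [ha_supp e he i hi, hb_supp e he i hi]
  · simp only [Pi.add_apply, Pi.smul_apply, smul_eq_mul, sum_add_distrib, ← mul_sum,
      ha_sum e he, hb_sum e he, ← add_mul, hst, one_mul]

theorem hPayload_add_smul_sub {V : Type*} (E : Finset (Finset V)) (a b : Finset V → V → ℝ)
    (t : ℝ) (i : V) :
    hPayload E (a + t • (b - a)) i = hPayload E a i + t * (hPayload E b i - hPayload E a i) := by
  simp only [hPayload, Pi.add_apply, Pi.smul_apply, Pi.sub_apply, smul_eq_mul, sum_add_distrib,
    ← mul_sum, sum_sub_distrib]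

theorem Qobj_sub_Qobj {V : Type*} [Fintype V] (E : Finset (Finset V)) (wV : V → ℝ)
    (a b : Finset V → V → ℝ) :
    Qobj E wV b - Qobj E wV a =
      2 * ∑ i, hPayload E a i * (hPayload E b i - hPayload E a i) / wV i +
        ∑ i, (hPayload E b i - hPayload E a i) ^ 2 / wV i :=
  sum_sq_div_sub_sum_sq_div _ _ _ _

theorem Qobj_add_smul_sub_sub_Qobj {V : Type*} [Fintype V] (E : Finset (Finset V))
    (wV : V → ℝ) (a b : Finset V → V → ℝ) (t : ℝ) :
    Qobj E wV (a + t • (b - a)) - Qobj E wV a =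
      t * (2 * ∑ i, hPayload E a i * (hPayload E b i - hPayload E a i) / wV i) +
        t ^ 2 * ∑ i, (hPayload E b i - hPayload E a i) ^ 2 / wV i := by
  simp only [Qobj_sub_Qobj, hPayload_add_smul_sub, add_sub_cancel_left, mul_sum]
  congr 1 <;> exact sum_congr rfl fun i _ => by ring

theorem sum_hPayload_mul_sub_div_nonneg_of_isMinOn {V : Type*} [Fintype V]
    {E : Finset (Finset V)} {wV : V → ℝ} {wE : Finset V → ℝ} {astar a : Finset V → V → ℝ}
    (hmin : IsMinOn (Qobj E wV) {a | InK E wE a} astar) (hstar : InK E wE astar)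
    (ha : InK E wE a) :
    0 ≤ ∑ i, hPayload E astar i * (hPayload E a i - hPayload E astar i) / wV i := by
  suffices 0 ≤ 2 * ∑ i, hPayload E astar i * (hPayload E a i - hPayload E astar i) / wV i by
    linarith
  refine nonneg_of_forall_mul_add_sq_mul_nonneg
    (c := ∑ i, (hPayload E a i - hPayload E astar i) ^ 2 / wV i) fun t ht => ?_
  rw [← Qobj_add_smul_sub_sub_Qobj, sub_nonneg]
  exact hmin ((convex_setOf_inK E wE).add_smul_sub_mem hstar ha (Set.Ioc_subset_Icc_self ht))

theorem sum_mul_sq_hDensity_sub {V : Type*} [Fintype V] {E : Finset (Finset V)} {wV : V → ℝ}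
    (hwV : ∀ i, wV i ≠ 0) (a b : Finset V → V → ℝ) :
    ∑ i, wV i * (hDensity E wV a i - hDensity E wV b i) ^ 2 =
      ∑ i, (hPayload E a i - hPayload E b i) ^ 2 / wV i := by
  refine sum_congr rfl fun i _ => ?_
  rw [hDensity, hDensity, ← sub_div, div_pow, sq (wV i), ← div_div, mul_div_cancel₀ _ (hwV i)]

theorem quadratic_additive_error_controls_density_general
    (E : Finset (Finset V))
    (wV : V → ℝ) (hwV : ∀ i, 0 < wV i)
    (wE : Finset V → ℝ)
    (astar : Finset V → V → ℝ) (hstar : InK E wE astar)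
    (hmin : ∀ a, InK E wE a → Qobj E wV astar ≤ Qobj E wV a)
    (a : Finset V → V → ℝ) (ha : InK E wE a) :
    ∑ i, wV i * (hDensity E wV a i - hDensity E wV astar i) ^ 2 ≤
      Qobj E wV a - Qobj E wV astar := by
  have hfirst := sum_hPayload_mul_sub_div_nonneg_of_isMinOn (isMinOn_iff.2 hmin) hstar ha
  rw [sum_mul_sq_hDensity_sub (fun i => (hwV i).ne'), Qobj_sub_Qobj]
  linarith

/-- **Additive error for the quadratic program controls the density vector.**
If `astar` minimizes `Q` over `K(H)` with induced density vector `ρ*`, then for every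
`a ∈ K(H)` with induced density vector `ρ`, `‖ρ − ρ*‖_w² ≤ Q(a) − Q(astar)`, where
`‖ρ‖_w² = Σ_i w_i ρ_i²`. -/
theorem quadratic_additive_error_controls_density
    (E : Finset (Finset V)) (hE : ∀ e ∈ E, e.Nonempty)
    (wV : V → ℝ) (hwV : ∀ i, 0 < wV i)
    (wE : Finset V → ℝ) (hwE : ∀ e ∈ E, 0 < wE e)
    (astar : Finset V → V → ℝ) (hstar : InK E wE astar)
    (hmin : ∀ a, InK E wE a → Qobj E wV astar ≤ Qobj E wV a)
    (a : Finset V → V → ℝ) (ha : InK E wE a) :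
    ∑ i, wV i * (hDensity E wV a i - hDensity E wV astar i) ^ 2 ≤
      Qobj E wV a - Qobj E wV astar :=
  quadratic_additive_error_controls_density_general E wV hwV wE astar hstar hmin a ha
end
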